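/- For every integer n ≥ 1, the polynomial G_n has degree n with leading coefficient p_n^(n) = 2^n/(n!·(n+1)!), and there exist n pairwise distinct real numbers r_1, …, r_n with r_k ≤ 0 for all k (in fact r_1 = 0) such that G_n(z) = (2^n/(n!·(n+1)!))·Π_{k=1}^{n}(z − r_k) for all z. In particular, all complex roots of G_n are real, simple and lie in (−∞, 0]. -/

import Mathlib

/-!
Splitting off the last part of a composition gives
`n (n + 1) p_{k+1}^{(n)} = 2 Σ_{m<n} (n - m) p_k^{(m)}`, hence
`n (n + 1) G_n = 2z Σ_{m<n} (n - m) G_m`, and taking a second difference yields a three-term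
recurrence for `G_n`. Writing `G_{n+1}(z) = p_{n+1}^{(n+1)} z E_n(z)` (`E_n` is `reducedPGF n`), the
monic polynomials `E_n` satisfy `E_{n+2} = (X + b_n) E_{n+1} - γ_n E_n` with `γ_n > 0`. If `E_n`
alternates in sign on the simple real roots of `E_{n+1}`, then so does `E_{n+2} = -γ_n E_n`, which
therefore has a root in every gap and one beyond each end; on these new roots `E_{n+1}` alternates
again. The roots are negative because `G_n` has nonnegative coefficients and `E_n(0) > 0`.
-/
open Finset

/-- `p n k` is the probability `p_k^{(n)} = P(f_0(T_n) = k)` that the random convex chain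
`T_n` has exactly `k` vertices (besides the two corners), given by Buchta's formula:
`p_k^{(n)} = 2^k · Σ_{i_1+⋯+i_k = n, i_j ≥ 1} Π_{j=1}^{k} i_j / (s_j (s_j + 1))`,
where `s_j = i_1 + ⋯ + i_j`.  In particular `p 0 0 = 1` and `p n 0 = 0` for `n ≥ 1`,
and `p n k = 0` for `k > n`. -/
noncomputable def p (n k : ℕ) : ℝ :=
  2 ^ k *
    ∑ i ∈ (Fintype.piFinset fun _ : Fin k => Finset.Icc 1 n).filter
        (fun i => ∑ j, i j = n),
      ∏ j : Fin k,
        (i j : ℝ) /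
          (((∑ l ∈ Finset.univ.filter (fun l => l ≤ j), i l : ℕ) : ℝ) *
            (((∑ l ∈ Finset.univ.filter (fun l => l ≤ j), i l : ℕ) : ℝ) + 1))

/-- `G n z = Σ_{k=1}^n p_k^{(n)} z^k` is the probability generating function of the
vertex number `f_0(T_n)`; by convention `G 0 z = 1` (note `p 0 0 = 1` and `p n 0 = 0`
for `n ≥ 1`, so the `k = 0` term is harmless). -/
noncomputable def G (n : ℕ) (z : ℝ) : ℝ :=
  ∑ k ∈ Finset.range (n + 1), p n k * z ^ k

open Polynomial Filter

def compositions (n k : ℕ) : Finset (Fin k → ℕ) :=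
  (Fintype.piFinset fun _ : Fin k => Icc 1 n).filter (fun i => ∑ j, i j = n)

def prefixSum {k : ℕ} (i : Fin k → ℕ) (j : Fin k) : ℕ :=
  ∑ l ∈ univ.filter (· ≤ j), i l

noncomputable def compositionWeight {k : ℕ} (i : Fin k → ℕ) : ℝ :=
  ∏ j, (i j : ℝ) / ((prefixSum i j : ℝ) * ((prefixSum i j : ℝ) + 1))

theorem p_eq_sum_compositions (n k : ℕ) :
    p n k = 2 ^ k * ∑ i ∈ compositions n k, compositionWeight i :=
  rfl

theorem mem_compositions {n k : ℕ} {i : Fin k → ℕ} :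
    i ∈ compositions n k ↔ (∀ j, 1 ≤ i j) ∧ ∑ j, i j = n := by
  simp only [compositions, mem_filter, Fintype.mem_piFinset, mem_Icc]
  refine ⟨fun h => ⟨fun j => (h.1 j).1, h.2⟩,
    fun ⟨hpos, hsum⟩ => ⟨fun j => ⟨hpos j, ?_⟩, hsum⟩⟩
  exact hsum ▸ single_le_sum (fun l _ => Nat.zero_le (i l)) (mem_univ j)

theorem compositions_eq_empty_of_lt {n k : ℕ} (h : n < k) : compositions n k = ∅ := by
  refine eq_empty_of_forall_notMem fun i hi => ?_
  obtain ⟨hpos, hsum⟩ := mem_compositions.mp hi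
  have : ∑ _j : Fin k, 1 ≤ ∑ j, i j := sum_le_sum fun j _ => hpos j
  simp only [sum_const, card_univ, Fintype.card_fin, smul_eq_mul, mul_one] at this
  omega

theorem prefixSum_snoc_castSucc {k : ℕ} (i : Fin k → ℕ) (a : ℕ) (j : Fin k) :
    prefixSum (Fin.snoc i a : Fin (k + 1) → ℕ) j.castSucc = prefixSum i j := by
  simp only [prefixSum, sum_filter, Fin.sum_univ_castSucc, Fin.snoc_castSucc,
    Fin.castSucc_le_castSucc_iff, Fin.snoc_last, (Fin.castSucc_lt_last j).not_ge, if_false,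
    add_zero]

theorem prefixSum_last {k : ℕ} (i : Fin (k + 1) → ℕ) :
    prefixSum i (Fin.last k) = ∑ j, i j := by
  simp [prefixSum, Fin.le_last]

theorem compositionWeight_snoc {k : ℕ} (i : Fin k → ℕ) (a : ℕ) :
    compositionWeight (Fin.snoc i a : Fin (k + 1) → ℕ) =
      compositionWeight i * (a / ((∑ j, i j + a : ℕ) * ((∑ j, i j + a : ℕ) + 1))) := by
  simp only [compositionWeight, Fin.prod_univ_castSucc, prefixSum_snoc_castSucc, prefixSum_last,
    Fin.sum_snoc, Fin.snoc_castSucc, Fin.snoc_last]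

theorem sum_compositions_succ {M : Type*} [AddCommMonoid M] {n k : ℕ}
    (f : (Fin (k + 1) → ℕ) → M) :
    ∑ i ∈ compositions n (k + 1), f i =
      ∑ m ∈ range n, ∑ i ∈ compositions m k, f (Fin.snoc i (n - m)) := by
  have last_le {i : Fin (k + 1) → ℕ} (hi : i ∈ compositions n (k + 1)) :
      i (Fin.last k) ≤ n :=
    (mem_compositions.mp hi).2 ▸ single_le_sum (fun l _ => Nat.zero_le (i l)) (mem_univ _)
  rw [sum_sigma']
  refine sum_nbij' (fun i => ⟨n - i (Fin.last k), Fin.init i⟩) (fun x => Fin.snoc x.2 (n - x.1))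
    ?_ ?_ ?_ ?_ ?_
  · intro i hi
    obtain ⟨hpos, hsum⟩ := mem_compositions.mp hi
    rw [Fin.sum_univ_castSucc] at hsum
    have := hpos (Fin.last k)
    simp only [mem_sigma, mem_range, mem_compositions]
    exact ⟨by omega, fun j => hpos _, by simp only [Fin.init]; omega⟩
  · rintro ⟨m, i⟩ hx
    simp only [mem_sigma, mem_range, mem_compositions] at hx
    obtain ⟨hm, hpos, hsum⟩ := hx
    simp only [mem_compositions, Fin.sum_snoc, hsum]
    refine ⟨fun j => Fin.lastCases ?_ (fun l => ?_) j, by omega⟩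
    · simp only [Fin.snoc_last]; omega
    · simpa using hpos l
  · intro i hi
    simp only [Nat.sub_sub_self (last_le hi), Fin.snoc_init_self]
  · rintro ⟨m, i⟩ hx
    simp only [mem_sigma, mem_range] at hx
    simp only [Fin.snoc_last, Fin.init_snoc, Nat.sub_sub_self hx.1.le]
  · intro i hi
    simp only [Nat.sub_sub_self (last_le hi), Fin.snoc_init_self]

theorem p_succ (n k : ℕ) :
    (n * (n + 1) : ℝ) * p n (k + 1) = 2 * ∑ m ∈ range n, (n - m : ℝ) * p m k := by
  rcases Nat.eq_zero_or_pos n with rfl | hn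
  · simp
  simp only [p_eq_sum_compositions, sum_compositions_succ, compositionWeight_snoc, mul_sum]
  refine sum_congr rfl fun m hm => sum_congr rfl fun i hi => ?_
  have hmn : m < n := mem_range.mp hm
  rw [(mem_compositions.mp hi).2, Nat.add_sub_cancel' hmn.le, Nat.cast_sub hmn.le]
  field_simp
  ring

theorem p_zero_zero : p 0 0 = 1 := by
  simp [p]

theorem p_zero_right {n : ℕ} (hn : n ≠ 0) : p n 0 = 0 := by
  simp [p, Ne.symm hn]

theorem p_of_lt {n k : ℕ} (h : n < k) : p n k = 0 := by
  simp [p_eq_sum_compositions, compositions_eq_empty_of_lt h]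

theorem p_nonneg (n k : ℕ) : 0 ≤ p n k := by
  unfold p
  positivity

noncomputable def leadCoeff (n : ℕ) : ℝ :=
  2 ^ n / ((n.factorial : ℝ) * ((n + 1).factorial : ℝ))

theorem leadCoeff_succ (n : ℕ) : (n + 1) * (n + 2) * leadCoeff (n + 1) = 2 * leadCoeff n := by
  simp only [leadCoeff, Nat.factorial_succ]
  push_cast
  field_simp
  ring

theorem p_self (n : ℕ) : p n n = leadCoeff n := by
  induction n with
  | zero => simp [p_zero_zero, leadCoeff]
  | succ n ih =>
    have hrec := p_succ (n + 1) n
    rw [sum_range_succ, sum_eq_zero fun m hm => by rw [p_of_lt (mem_range.mp hm), mul_zero], ih]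
      at hrec
    apply mul_left_cancel₀ (show ((n : ℝ) + 1) * (n + 2) ≠ 0 by positivity)
    push_cast at hrec
    linear_combination hrec - leadCoeff_succ n

theorem G_eq_sum_range {n N : ℕ} (h : n < N) (z : ℝ) :
    G n z = ∑ k ∈ range N, p n k * z ^ k :=
  sum_subset (range_subset_range.mpr h) fun k _ hk => by
    rw [p_of_lt (by simpa using hk), zero_mul]

theorem G_pos (n : ℕ) {z : ℝ} (hz : 0 < z) : 0 < G n z := by
  rw [G, sum_range_succ, p_self]
  refine add_pos_of_nonneg_of_pos (sum_nonneg fun k _ => ?_) ?_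
  · exact mul_nonneg (p_nonneg n k) (pow_nonneg hz.le k)
  · exact mul_pos (by unfold leadCoeff; positivity) (pow_pos hz n)

theorem G_mul_eq_sum (n : ℕ) (z : ℝ) :
    (n * (n + 1) : ℝ) * G n z = 2 * z * ∑ m ∈ range n, (n - m : ℝ) * G m z := by
  rcases Nat.eq_zero_or_pos n with rfl | hn
  · simp
  calc (n * (n + 1) : ℝ) * G n z
      = ∑ k ∈ range n, (n * (n + 1) : ℝ) * p n (k + 1) * z ^ (k + 1) := by
        rw [G, sum_range_succ', p_zero_right hn.ne', zero_mul, add_zero, mul_sum]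
        exact sum_congr rfl fun k _ => by ring
    _ = ∑ k ∈ range n, ∑ m ∈ range n, 2 * z * ((n - m : ℝ) * (p m k * z ^ k)) := by
        refine sum_congr rfl fun k _ => ?_
        rw [p_succ, mul_sum, sum_mul]
        exact sum_congr rfl fun m _ => by ring
    _ = 2 * z * ∑ m ∈ range n, (n - m : ℝ) * G m z := by
        rw [sum_comm, mul_sum]
        refine sum_congr rfl fun m hm => ?_
        rw [G_eq_sum_range (mem_range.mp hm), mul_sum, mul_sum]

theorem sum_range_succ_sub_mul {R : Type*} [CommRing R] (f : ℕ → R) (n : ℕ) :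
    ∑ m ∈ range (n + 1), ((n + 1 : ℕ) - m : R) * f m =
      ∑ m ∈ range n, ((n : R) - m) * f m + ∑ m ∈ range (n + 1), f m := by
  rw [sum_range_succ, sum_range_succ, ← add_assoc, ← sum_add_distrib]
  push_cast
  congr 1
  · exact sum_congr rfl fun m _ => by ring
  · ring

theorem G_three_term (m : ℕ) (z : ℝ) :
    (m + 2) * (m + 3) * G (m + 2) z =
      (2 * (m + 1) * (m + 2) + 2 * z) * G (m + 1) z - m * (m + 1) * G m z := by
  have h2 := G_mul_eq_sum (m + 1 + 1) z
  have h1 := G_mul_eq_sum (m + 1) z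
  have h0 := G_mul_eq_sum m z
  have d1 := sum_range_succ_sub_mul (fun j => G j z) (m + 1)
  have d0 := sum_range_succ_sub_mul (fun j => G j z) m
  have e := sum_range_succ (fun j => G j z) (m + 1)
  rw [show m + 2 = m + 1 + 1 from rfl]
  linear_combination (norm := skip) h2 - 2 * h1 + h0 + 2 * z * d1 - 2 * z * d0 + 2 * z * e
  push_cast
  ring

noncomputable def reducedPGF : ℕ → ℝ[X]
  | 0 => 1
  | 1 => X + C 2
  | n + 2 => (X + C (((n : ℝ) + 2) * (n + 3))) * reducedPGF (n + 1)
      - C (((n : ℝ) + 1) * (n + 2) ^ 2 * (n + 3) / 4) * reducedPGF n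

theorem reducedPGF_eval_zero (n : ℕ) :
    (reducedPGF n).eval 0 = ((n + 1).factorial : ℝ) ^ 2 / 2 ^ n := by
  induction n using Nat.strong_induction_on with
  | _ n ih =>
    match n with
    | 0 => simp [reducedPGF]
    | 1 => norm_num [reducedPGF, Nat.factorial]
    | m + 2 =>
      simp only [reducedPGF, eval_sub, eval_mul, eval_add, eval_X, eval_C, zero_add,
        ih m (by omega), ih (m + 1) (by omega), Nat.factorial_succ (m + 2),
        Nat.factorial_succ (m + 1)]
      push_cast
      field_simp
      ring

theorem G_succ_eq_reducedPGF (n : ℕ) (z : ℝ) :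
    G (n + 1) z = leadCoeff (n + 1) * z * (reducedPGF n).eval z := by
  induction n using Nat.strong_induction_on with
  | _ n ih =>
    match n with
    | 0 => norm_num [G, sum_range_succ, p_zero_right, p_self, leadCoeff, reducedPGF]
    | 1 =>
      have h := G_three_term 0 z
      rw [ih 0 (by omega)] at h
      norm_num [reducedPGF, leadCoeff, Nat.factorial] at h ⊢
      linear_combination h / 6
    | m + 2 =>
      have h := G_three_term (m + 1) z
      rw [ih (m + 1) (by omega), ih m (by omega)] at h
      have c2 := leadCoeff_succ (m + 1)
      have c3 := leadCoeff_succ (m + 2)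
      simp only [reducedPGF, eval_sub, eval_mul, eval_add, eval_X, eval_C]
      simp only [show m + 1 + 2 = m + 3 from rfl, show m + 1 + 1 = m + 2 from rfl] at h c2 c3 ⊢
      push_cast at h c2 c3 ⊢
      apply mul_left_cancel₀ (show ((m : ℝ) + 3) * (m + 4) ≠ 0 by positivity)
      linear_combination h
        - z * ((z + (m + 2) * (m + 3)) * (reducedPGF (m + 1)).eval z
            - (m + 1) * (m + 2) ^ 2 * (m + 3) / 4 * (reducedPGF m).eval z) * c3
        + z * (reducedPGF m).eval z * ((m + 1) * (m + 2) / 2) * c2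

theorem neg_one_pow_succ_sub {R : Type*} [Ring R] {k m : ℕ} (h : k ≤ m) :
    (-1 : R) ^ (m + 1 - k) = -(-1) ^ (m - k) := by
  rw [Nat.succ_sub h, pow_succ, mul_neg_one]

theorem exists_zero_of_mul_neg {f : ℝ → ℝ} (hf : Continuous f) {a b : ℝ} (hab : a < b)
    (h : f a * f b < 0) : ∃ x ∈ Set.Ioo a b, f x = 0 := by
  rcases mul_neg_iff.mp h with ⟨ha, hb⟩ | ⟨ha, hb⟩
  · exact intermediate_value_Ioo' hab.le hf.continuousOn ⟨hb, ha⟩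
  · exact intermediate_value_Ioo hab.le hf.continuousOn ⟨ha, hb⟩

theorem exists_zeros_of_alternating {m : ℕ} {f : ℝ → ℝ} (hf : Continuous f)
    {x : Fin (m + 1) → ℝ} (hx : StrictMono x)
    (hsign : ∀ i : Fin (m + 1), 0 < (-1) ^ (m - (i : ℕ)) * f (x i)) :
    ∃ t : Fin m → ℝ, ∀ i, x i.castSucc < t i ∧ t i < x i.succ ∧ f (t i) = 0 := by
  have key (i : Fin m) : ∃ y ∈ Set.Ioo (x i.castSucc) (x i.succ), f y = 0 := by
    refine exists_zero_of_mul_neg hf (hx i.castSucc_lt_succ) ?_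
    have h₁ := hsign i.castSucc
    have h₂ := hsign i.succ
    rw [Fin.val_castSucc, show m - i = m - (i + 1) + 1 by omega, pow_succ] at h₁
    rw [Fin.val_succ] at h₂
    rcases neg_one_pow_eq_or ℝ (m - (i + 1)) with he | he <;> rw [he] at h₁ h₂ <;> nlinarith
  choose t ht hft using key
  exact ⟨t, fun i => ⟨(ht i).1, (ht i).2, hft i⟩⟩

theorem Polynomial.Monic.eventually_eval_pos {P : ℝ[X]} (hP : P.Monic) :
    ∀ᶠ x in atTop, 0 < P.eval x := by
  refine P.isEquivalent_atTop_lead.eventually_pos ?_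
  filter_upwards [eventually_gt_atTop 0] with x hx
  simpa [hP.leadingCoeff] using pow_pos hx _

theorem Polynomial.Monic.eventually_neg_one_pow_mul_eval_pos {P : ℝ[X]} (hP : P.Monic) :
    ∀ᶠ x in atBot, 0 < (-1) ^ P.natDegree * P.eval x := by
  have h := hP.neg_one_pow_natDegree_mul_comp_neg_X.eventually_eval_pos
  filter_upwards [tendsto_neg_atBot_atTop.eventually h] with x hx
  simpa using hx

theorem Polynomial.eq_prod_X_sub_C_of_monic {K : Type*} [Field K] {P : K[X]} (hP : P.Monic)
    {m : ℕ} (hdeg : P.natDegree ≤ m) {t : Fin m → K} (ht : Function.Injective t)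
    (hroot : ∀ k, P.eval (t k) = 0) : P = ∏ k, (X - C (t k)) := by
  refine eq_of_monic_of_dvd_of_natDegree_le (monic_prod_X_sub_C _ _) hP ?_ (by simpa using hdeg)
  refine Finset.prod_dvd_of_coprime (fun i _ j _ hij => pairwise_coprime_X_sub_C ht hij) ?_
  exact fun k _ => dvd_iff_isRoot.mpr (hroot k)

theorem Polynomial.monic_three_term {R : Type*} [CommRing R] [Nontrivial R] {A B : R[X]} {m : ℕ}
    (hA : A.Monic) (hAdeg : A.natDegree = m + 1) (hB : B.natDegree ≤ m) (b γ : R) :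
    ((X + C b) * A - C γ * B).Monic ∧ ((X + C b) * A - C γ * B).natDegree = m + 2 := by
  have hXA : ((X + C b) * A).Monic := (monic_X_add_C b).mul hA
  have hXAdeg : ((X + C b) * A).natDegree = m + 2 := by
    rw [(monic_X_add_C b).natDegree_mul hA, natDegree_X_add_C, hAdeg]
    ring
  have hlt : (C γ * B).natDegree < ((X + C b) * A).natDegree :=
    hXAdeg ▸ (natDegree_C_mul_le γ B).trans_lt (by omega)
  exact ⟨hXA.sub_of_left (degree_lt_degree hlt),
    hXAdeg ▸ natDegree_sub_eq_left_of_natDegree_lt hlt⟩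

theorem neg_one_pow_mul_prod_sub_pos {R : Type*} [CommRing R] [LinearOrder R]
    [IsStrictOrderedRing R] {m : ℕ} (s : Fin m → R) {x : R} (k : ℕ)
    (hlt : ∀ j : Fin m, (j : ℕ) < k → s j < x)
    (hgt : ∀ j : Fin m, k ≤ j → x < s j) : 0 < (-1) ^ (m - k) * ∏ j, (x - s j) := by
  induction m with
  | zero => simp
  | succ m ih =>
    have hinit := ih (fun j => s j.castSucc) (fun j hj => hlt _ hj) (fun j hj => hgt _ hj)
    rw [Fin.prod_univ_castSucc]
    by_cases hk : k ≤ m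
    · have hlast : x - s (Fin.last m) < 0 := sub_neg.mpr (hgt _ hk)
      rw [neg_one_pow_succ_sub hk]
      nlinarith
    · have hlast : 0 < x - s (Fin.last m) := sub_pos.mpr (hlt _ (by simp; omega))
      rw [show m + 1 - k = m - k by omega, ← mul_assoc]
      exact mul_pos hinit hlast

theorem exists_interlacing_zeros {m : ℕ} {f : ℝ → ℝ} (hf : Continuous f)
    {s : Fin (m + 1) → ℝ} (hs : StrictMono s)
    (hsign : ∀ k : Fin (m + 1), 0 < (-1) ^ (m + 1 - (k : ℕ)) * f (s k))
    (htop : ∀ᶠ y in atTop, 0 < f y) (hbot : ∀ᶠ y in atBot, 0 < (-1) ^ m * f y) :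
    ∃ t : Fin (m + 2) → ℝ, StrictMono t ∧ (∀ k, f (t k) = 0) ∧
      ∀ k : Fin (m + 1), t k.castSucc < s k ∧ s k < t k.succ := by
  obtain ⟨R, hfR, hR⟩ := (htop.and (eventually_gt_atTop (s (Fin.last m)))).exists
  obtain ⟨L, hfL, hL⟩ := (hbot.and (eventually_lt_atBot (s 0))).exists
  set x : Fin (m + 3) → ℝ := Fin.cons L (Fin.snoc s R : Fin (m + 2) → ℝ)
  have hx : StrictMono x := by
    rw [Fin.strictMono_cons]
    refine ⟨fun j => ?_, Fin.strictMono_iff_lt_succ.mpr fun i => ?_⟩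
    · refine Fin.lastCases ?_ (fun k => ?_) j
      · simpa using (hL.trans_le (hs.monotone (Fin.zero_le _))).trans hR
      · simpa using hL.trans_le (hs.monotone (Fin.zero_le _))
    · refine Fin.lastCases ?_ (fun k => ?_) i
      · simpa using hR
      · rw [Fin.succ_castSucc, Fin.snoc_castSucc, Fin.snoc_castSucc]
        exact hs k.castSucc_lt_succ
  have hxsign (i : Fin (m + 3)) : 0 < (-1) ^ (m + 2 - (i : ℕ)) * f (x i) := by
    refine Fin.cases ?_ (fun j => Fin.lastCases ?_ (fun k => ?_) j) i
    · simpa [x, pow_add] using hfL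
    · simpa [x] using hfR
    · simpa [x, show m + 2 - (k + 1) = m + 1 - k by omega] using hsign k
  obtain ⟨t, ht⟩ := exists_zeros_of_alternating hf hx hxsign
  have hinter (k : Fin (m + 1)) : t k.castSucc < s k ∧ s k < t k.succ := by
    constructor
    · simpa [x] using (ht k.castSucc).2.1
    · simpa [x, ← Fin.succ_castSucc] using (ht k.succ).1
  exact ⟨t, Fin.strictMono_iff_lt_succ.mpr fun k => (hinter k).1.trans (hinter k).2,
    fun k => (ht k).2.2, hinter⟩

theorem exists_interlacing_roots_three_term {m : ℕ} {A B : ℝ[X]} {b γ : ℝ} (hγ : 0 < γ)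
    {s : Fin (m + 1) → ℝ} (hs : StrictMono s) (hA : A = ∏ k, (X - C (s k)))
    (hB : B.natDegree ≤ m)
    (hsign : ∀ k : Fin (m + 1), 0 < (-1) ^ (m - (k : ℕ)) * B.eval (s k)) :
    ∃ t : Fin (m + 2) → ℝ, StrictMono t ∧
      (X + C b) * A - C γ * B = ∏ k, (X - C (t k)) ∧
      ∀ k : Fin (m + 2), 0 < (-1) ^ (m + 1 - (k : ℕ)) * A.eval (t k) := by
  set Q := (X + C b) * A - C γ * B
  have hAeval (y : ℝ) : A.eval y = ∏ k, (y - s k) := by simp [hA, eval_prod]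
  obtain ⟨hQ, hQdeg⟩ := monic_three_term (hA ▸ monic_prod_X_sub_C _ _) (by simp [hA]) hB b γ
  have hQsign (k : Fin (m + 1)) : 0 < (-1) ^ (m + 1 - (k : ℕ)) * Q.eval (s k) := by
    have hAs : A.eval (s k) = 0 := by rw [hAeval]; exact prod_eq_zero (mem_univ k) (sub_self _)
    calc (0 : ℝ) < γ * ((-1) ^ (m - (k : ℕ)) * B.eval (s k)) := mul_pos hγ (hsign k)
      _ = _ := by
        rw [neg_one_pow_succ_sub (Nat.lt_succ_iff.mp k.isLt)]
        simp only [Q, eval_sub, eval_mul, hAs, eval_C]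
        ring
  have hbot := hQ.eventually_neg_one_pow_mul_eval_pos
  rw [hQdeg, pow_add, neg_one_sq, mul_one] at hbot
  obtain ⟨t, ht, hroot, hinter⟩ :=
    exists_interlacing_zeros Q.continuous hs hQsign hQ.eventually_eval_pos hbot
  refine ⟨t, ht, eq_prod_X_sub_C_of_monic hQ hQdeg.le ht.injective hroot, fun k => ?_⟩
  rw [hAeval]
  refine neg_one_pow_mul_prod_sub_pos s k (fun j hj => ?_) (fun j hj => ?_)
  · exact (hinter j).2.trans_le (ht.monotone (Fin.le_def.mpr (by simpa using hj)))
  · exact (ht.monotone (Fin.le_def.mpr (by simpa using hj))).trans_lt (hinter j).1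

theorem exists_strictMono_roots_of_three_term {P : ℕ → ℝ[X]} {a : ℝ} {b γ : ℕ → ℝ}
    (h0 : P 0 = 1) (h1 : P 1 = X + C a)
    (hrec : ∀ n, P (n + 2) = (X + C (b n)) * P (n + 1) - C (γ n) * P n) (hγ : ∀ n, 0 < γ n)
    (n : ℕ) : ∃ s : Fin n → ℝ, StrictMono s ∧ P n = ∏ k, (X - C (s k)) := by
  have key (n : ℕ) : (P n).natDegree ≤ n ∧ ∃ s : Fin (n + 1) → ℝ, StrictMono s ∧
      P (n + 1) = ∏ k, (X - C (s k)) ∧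
      ∀ k : Fin (n + 1), 0 < (-1) ^ (n - (k : ℕ)) * (P n).eval (s k) := by
    induction n with
    | zero =>
      exact ⟨by simp [h0], fun _ => -a, Subsingleton.strictMono (α := Fin 1) _, by simp [h1],
        by simp [h0]⟩
    | succ n ih =>
      obtain ⟨hdeg, s, hs, hPs, hsign⟩ := ih
      obtain ⟨t, ht, hPt, hsign'⟩ :=
        exists_interlacing_roots_three_term (b := b n) (hγ n) hs hPs hdeg hsign
      exact ⟨by simp [hPs], t, ht, hrec n ▸ hPt, hsign'⟩
  cases n with
  | zero => exact ⟨Fin.elim0, fun i => i.elim0, by simp [h0]⟩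
  | succ n => obtain ⟨-, s, hs, hPs, -⟩ := key n; exact ⟨s, hs, hPs⟩

theorem reducedPGF_roots (n : ℕ) :
    ∃ s : Fin n → ℝ, StrictMono s ∧ (∀ k, s k < 0) ∧
      reducedPGF n = ∏ k, (X - C (s k)) := by
  obtain ⟨s, hs, hE⟩ := exists_strictMono_roots_of_three_term (P := reducedPGF)
    (b := fun n => ((n : ℝ) + 2) * (n + 3))
    (γ := fun n => ((n : ℝ) + 1) * (n + 2) ^ 2 * (n + 3) / 4) rfl rfl (fun _ => rfl)
    (fun _ => by positivity) n
  refine ⟨s, hs, fun k => ?_, hE⟩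
  have hroot : (reducedPGF n).eval (s k) = 0 := by
    rw [hE, eval_prod]
    exact prod_eq_zero (mem_univ k) (by simp)
  rcases lt_trichotomy (s k) 0 with hneg | hzero | hpos
  · exact hneg
  · rw [hzero, reducedPGF_eval_zero] at hroot
    exact absurd hroot (by positivity)
  · have := G_pos (n + 1) hpos
    rw [G_succ_eq_reducedPGF, hroot, mul_zero] at this
    exact absurd this (lt_irrefl 0)

/-- Theorem 4: for every `n ≥ 1` the probability generating function `G_n` has leading
coefficient `p_n^{(n)} = 2^n/(n!(n+1)!)` and factors into `n` distinct real linear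
factors with roots `r_1, …, r_n ∈ (−∞, 0]`, one of which is `0`:
`G_n(z) = (2^n/(n!(n+1)!)) Π_{k=1}^{n} (z − r_k)`.
In particular `G_n` is a polynomial of degree `n` all of whose roots are real,
simple and lie in `(−∞, 0]`. -/
theorem G_real_rooted (n : ℕ) (hn : 1 ≤ n) :
    p n n = 2 ^ n / ((n.factorial : ℝ) * ((n + 1).factorial : ℝ)) ∧
      ∃ r : Fin n → ℝ, Function.Injective r ∧ (∀ k, r k ≤ 0) ∧ (∃ k₀, r k₀ = 0) ∧
        ∀ z : ℝ,
          G n z =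
            2 ^ n / ((n.factorial : ℝ) * ((n + 1).factorial : ℝ)) *
              ∏ k : Fin n, (z - r k) := by
  obtain ⟨m, rfl⟩ := Nat.exists_eq_add_of_le' hn
  obtain ⟨s, hs, hneg, hE⟩ := reducedPGF_roots m
  refine ⟨p_self _, Fin.cons 0 s, ?_, fun k => Fin.cases le_rfl (fun j => (hneg j).le) k,
    ⟨0, rfl⟩, fun z => ?_⟩
  · exact Fin.cons_injective_iff.mpr ⟨fun ⟨j, hj⟩ => (hneg j).ne hj, hs.injective⟩
  · rw [G_succ_eq_reducedPGF, hE, eval_prod, Fin.prod_univ_succ]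
    simp only [eval_sub, eval_X, eval_C, Fin.cons_zero, Fin.cons_succ, sub_zero, leadCoeff]
    ring
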